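/- If x ∈ 𝕂^n satisfies x_1 x_2 ⋯ x_n = u_1 u_2 ⋯ u_n, then f_u(x) = x. -/

import Mathlib

/-!
Fix `j` and put `a_k = (∏_{i=1}^{k} x_{j+i}) (∏_{i=k+1}^{n} u_{j+i})` for `0 ≤ k ≤ n`. Since
`u_{j+n} = u_j`, distributing gives `u_j t_{n-1,j} = a_0 + ⋯ + a_{n-1}` and
`x_{j+1} t_{n-1,j+1} = a_1 + ⋯ + a_n`, and the hypothesis says exactly `a_0 = ∏ u = ∏ x = a_n`.
So the two sums agree after a cyclic rotation of their terms (no cancellation of `+` is needed).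
Using `u_j t_{n-1,j} = x_{j+1} t_{n-1,j+1}` at `j = i - 1` and at `j = i` gives
`y_i = u_i (x_i t_{n-1,i}) / (u_i t_{n-1,i}) = x_i`.
-/

/- Setting: a semifield `K` (commutative associative addition `add`, multiplicative
abelian group, distributivity), a fixed `u ∈ K^n`, all `n`-tuples extended
`n`-periodically to families indexed by `ℤ`. -/

variable {K : Type*} [CommGroup K]

/-- The nonempty sum `f 0 + f 1 + ⋯ + f r` with respect to the binary operation `add`. -/
def addSum (add : K → K → K) (f : ℕ → K) : ℕ → K
  | 0 => f 0
  | r + 1 => add (addSum add f r) (f (r + 1))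

/-- The element `t_{r,j} = Σ_{k=0}^{r} (∏_{i=1}^{k} x_{j+i}) · (∏_{i=k+1}^{r} u_{j+i})`. -/
def tpoly (add : K → K → K) (u x : ℤ → K) (r : ℕ) (j : ℤ) : K :=
  addSum add
    (fun k => (∏ i ∈ Finset.Icc 1 k, x (j + i)) * ∏ i ∈ Finset.Icc (k + 1) r, u (j + i)) r

open Fin.IntCast in
/-- The `n`-periodic extension of an `n`-tuple to a family indexed by `ℤ`. -/
def extend {n : ℕ} [NeZero n] (v : Fin n → K) : ℤ → K := fun i => v (i : Fin n)

/-- The map `f_u : K^n → K^n`, sending `x` to the `n`-tuple `y` with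
`y_i = u_i · (u_{i-1} t_{n-1,i-1}) / (x_{i+1} t_{n-1,i+1})`. -/
def fu {n : ℕ} [NeZero n] (add : K → K → K) (u : Fin n → K) (x : Fin n → K) : Fin n → K :=
  fun i =>
    u i * (extend u ((i : ℤ) - 1) * tpoly add (extend u) (extend x) (n - 1) ((i : ℤ) - 1)) /
      (extend x ((i : ℤ) + 1) * tpoly add (extend u) (extend x) (n - 1) ((i : ℤ) + 1))

section AddSum

variable {α : Type*} (add : α → α → α)

lemma addSum_congr {f g : ℕ → α} (r : ℕ) (h : ∀ k ≤ r, f k = g k) :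
    addSum add f r = addSum add g r := by
  induction r with
  | zero => exact h 0 le_rfl
  | succ r ih => rw [addSum, addSum, ih fun k hk => h k (hk.trans r.le_succ), h (r + 1) le_rfl]

lemma mul_addSum [Mul α] (hdistrib : ∀ a b c : α, a * add b c = add (a * b) (a * c))
    (a : α) (f : ℕ → α) (r : ℕ) : a * addSum add f r = addSum add (fun k => a * f k) r := by
  induction r with
  | zero => rfl
  | succ r ih => rw [addSum, addSum, hdistrib, ih]

lemma addSum_succ' (hadd_assoc : ∀ a b c : α, add (add a b) c = add a (add b c))
    (f : ℕ → α) (r : ℕ) :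
    addSum add f (r + 1) = add (f 0) (addSum add (fun k => f (k + 1)) r) := by
  induction r with
  | zero => rfl
  | succ r ih => rw [addSum, ih, hadd_assoc, addSum]

lemma addSum_rotate (hadd_assoc : ∀ a b c : α, add (add a b) c = add a (add b c))
    (hadd_comm : ∀ a b : α, add a b = add b a)
    (f : ℕ → α) (r : ℕ) (hf : f 0 = f (r + 1)) :
    addSum add f r = addSum add (fun k => f (k + 1)) r := by
  cases r with
  | zero => exact hf
  | succ r => rw [addSum_succ' add hadd_assoc, hf, hadd_comm, addSum]

end AddSum

section Products

variable {M : Type*} [CommMonoid M] (g : ℤ → M) (j : ℤ)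

lemma prod_Icc_add_one_add_one (a b : ℕ) :
    ∏ i ∈ Finset.Icc (a + 1) (b + 1), g (j + i) = ∏ i ∈ Finset.Icc a b, g (j + 1 + i) := by
  rw [← Finset.map_add_right_Icc a b 1, Finset.prod_map]
  refine Finset.prod_congr rfl fun i _ => congrArg g ?_
  simp only [addRightEmbedding_apply, Nat.cast_add, Nat.cast_one]
  ring

lemma prod_Icc_one_add_one (k : ℕ) :
    ∏ i ∈ Finset.Icc 1 (k + 1), g (j + i) = g (j + 1) * ∏ i ∈ Finset.Icc 1 k, g (j + 1 + i) := by
  rw [← zero_add 1, prod_Icc_add_one_add_one, Finset.Icc_eq_cons_Ioc k.zero_le, Finset.prod_cons,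
    ← Finset.Icc_add_one_left_eq_Ioc, Nat.cast_zero, add_zero]

lemma Function.Periodic.prod_Icc_one_add {n : ℕ} (hg : Function.Periodic g n) :
    ∏ i ∈ Finset.Icc 1 n, g (j + i) = ∏ i ∈ Finset.range n, g i := by
  cases n with
  | zero => rfl
  | succ m =>
    set h : ℤ → M := fun k => ∏ i ∈ Finset.Icc 1 (m + 1), g (k + i)
    have h_periodic : Function.Periodic h 1 := fun k => by
      simp only [h]
      rw [Finset.prod_Icc_succ_top (by omega), hg, prod_Icc_one_add_one, mul_comm]
    have h_const (k : ℤ) : h k = h 0 := by simpa using h_periodic.int_mul_eq k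
    calc h j = h (-1) := (h_const j).trans (h_const (-1)).symm
      _ = ∏ i ∈ Finset.range (m + 1), g i := by
        simp only [h]
        rw [prod_Icc_add_one_add_one, Nat.range_succ_eq_Icc_zero]
        simp

end Products

section Periodic

variable {α : Type*} {n : ℕ} [NeZero n]

lemma extend_periodic (v : Fin n → α) : Function.Periodic (extend v) n := fun i => by
  simp only [extend]
  congr 1
  ext
  simp

lemma extend_natCast (v : Fin n → α) (i : Fin n) : extend v (i : ℕ) = v i := by
  simp only [extend]
  congr 1
  ext
  simp [← Int.natCast_mod, Nat.mod_eq_of_lt i.isLt]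

lemma prod_Icc_extend [CommMonoid α] (v : Fin n → α) (j : ℤ) :
    ∏ i ∈ Finset.Icc 1 n, extend v (j + i) = ∏ i, v i := by
  rw [(extend_periodic v).prod_Icc_one_add, ← Fin.prod_univ_eq_prod_range (fun i => extend v i)]
  simp_rw [extend_natCast]

end Periodic

lemma mul_tpoly_eq_mul_tpoly_add_one (add : K → K → K)
    (hadd_assoc : ∀ a b c : K, add (add a b) c = add a (add b c))
    (hadd_comm : ∀ a b : K, add a b = add b a)
    (hdistrib : ∀ a b c : K, a * add b c = add (a * b) (a * c))
    (U X : ℤ → K) (m : ℕ) (j : ℤ) (hU : U (j + (m + 1 : ℕ)) = U j)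
    (hprod : ∏ i ∈ Finset.Icc 1 (m + 1), U (j + i) = ∏ i ∈ Finset.Icc 1 (m + 1), X (j + i)) :
    U j * tpoly add U X m j = X (j + 1) * tpoly add U X m (j + 1) := by
  set a : ℕ → K := fun k =>
    (∏ i ∈ Finset.Icc 1 k, X (j + i)) * ∏ i ∈ Finset.Icc (k + 1) (m + 1), U (j + i)
  calc U j * tpoly add U X m j = addSum add a m := by
        rw [tpoly, mul_addSum add hdistrib]
        refine addSum_congr add m fun k hk => ?_
        dsimp only [a]
        rw [Finset.prod_Icc_succ_top (by omega), hU, mul_left_comm, mul_comm (U j)]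
    _ = addSum add (fun k => a (k + 1)) m :=
        addSum_rotate add hadd_assoc hadd_comm a m (by simp [a, hprod])
    _ = X (j + 1) * tpoly add U X m (j + 1) := by
        rw [tpoly, mul_addSum add hdistrib]
        refine addSum_congr add m fun k _ => ?_
        dsimp only [a]
        rw [prod_Icc_one_add_one, prod_Icc_add_one_add_one, mul_assoc]

/-- Proposition: if `x_1 x_2 ⋯ x_n = u_1 u_2 ⋯ u_n`, then `f_u(x) = x`. -/
theorem fu_fixed_point (n : ℕ) [NeZero n] (add : K → K → K)
    (hadd_assoc : ∀ a b c : K, add (add a b) c = add a (add b c))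
    (hadd_comm : ∀ a b : K, add a b = add b a)
    (hdistrib : ∀ a b c : K, a * add b c = add (a * b) (a * c))
    (u : Fin n → K)
    (x : Fin n → K) (hx : ∏ i, x i = ∏ i, u i) :
    fu add u x = x := by
  obtain ⟨m, rfl⟩ := Nat.exists_eq_add_one_of_ne_zero (NeZero.ne n)
  have hkey (j : ℤ) := mul_tpoly_eq_mul_tpoly_add_one add hadd_assoc hadd_comm hdistrib
    (extend u) (extend x) m j (extend_periodic u j) (by rw [prod_Icc_extend, prod_Icc_extend, hx])
  funext i
  rw [fu, Nat.add_sub_cancel, hkey, sub_add_cancel, ← hkey, extend_natCast, extend_natCast,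
    mul_left_comm, mul_div_cancel_right]
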